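/- arXiv:1306.3495 — 3 statements merged into one kernel-verified Lean document; each statement's English description precedes it below -/
import Mathlib

section
/- Let B be an n×n integer matrix and D = diag(d_1,…,d_n) with each d_i a positive integer such that DB is skew-symmetric. Define the matrix C by c_{ij} = gcd(d_i,d_j)·b_{ij}/d_j. Then C is a skew-symmetric integer matrix. -/
/-! `dⱼ` divides `dᵢ bᵢⱼ = -dⱼ bⱼᵢ`, hence it divides `gcd(dⱼ, dᵢ) bᵢⱼ`; skew-symmetry of `C` is
then the identity `gcd(dᵢ,dⱼ) bⱼᵢ / dᵢ = -gcd(dᵢ,dⱼ) bᵢⱼ / dⱼ` of rationals, which is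
`dᵢ bᵢⱼ = -dⱼ bⱼᵢ` divided by `dᵢ dⱼ`. -/

/-- If `D = diag(d₁,…,dₙ)` (with positive diagonal entries) skew-symmetrizes the integer
matrix `B` (i.e. `dᵢ bᵢⱼ = -dⱼ bⱼᵢ`), then the matrix `C` with
`cᵢⱼ = gcd(dᵢ,dⱼ)·bᵢⱼ/dⱼ` is a skew-symmetric integer matrix. -/
theorem stmt1 {n : ℕ} (B : Matrix (Fin n) (Fin n) ℤ) (d : Fin n → ℤ)
    (hd : ∀ i, 0 < d i) (h : ∀ i j, d i * B i j = -(d j * B j i)) :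
    ∃ C : Matrix (Fin n) (Fin n) ℤ,
      (∀ i j, (C i j : ℚ) = (Int.gcd (d i) (d j) : ℚ) * (B i j : ℚ) / (d j : ℚ)) ∧
      (∀ i j, C j i = -C i j) := by
  have hd₀ (i : Fin n) : (d i : ℚ) ≠ 0 := by exact_mod_cast (hd i).ne'
  have hdvd (i j : Fin n) : d j ∣ (Int.gcd (d i) (d j) : ℤ) * B i j := by
    rw [Int.gcd_comm, Int.coe_gcd]
    exact dvd_gcd_mul_of_dvd_mul ⟨-B j i, by rw [h]; ring⟩
  set C : Matrix (Fin n) (Fin n) ℤ := fun i j ↦ (Int.gcd (d i) (d j) : ℤ) * B i j / d j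
  have hC (i j : Fin n) : (C i j : ℚ) = (Int.gcd (d i) (d j) : ℚ) * (B i j : ℚ) / (d j : ℚ) := by
    rw [Int.cast_div (hdvd i j) (hd₀ j)]
    push_cast
    rfl
  refine ⟨C, hC, fun i j ↦ ?_⟩
  have hB : (d j : ℚ) * B j i = -(d i * B i j) := by exact_mod_cast h j i
  suffices (C j i : ℚ) = -C i j by exact_mod_cast this
  rw [hC, hC, Int.gcd_comm]
  field_simp [hd₀ i, hd₀ j]
  linear_combination (Int.gcd (d i) (d j) : ℚ) * hB
end

section
/- Consider the 4×4 integer matrix B with rows (0, -a, 0, b), (1, 0, -1, 0), (0, a, 0, -b), (-1, 0, 1, 0), where a < b are positive integers and a does not divide b. Then B is skew-symmetrizable with skew-symmetrizer diag(1, a, 1, b), and B does not admit a global unfolding: for every unfolding (C, (e_i), (E_i)) of B, the matrix μ₂μ₄(C) violates the sign condition (2); specifically, the E₁×E₃ block of μ₂μ₄(C) contains both a positive and a negative entry. -/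
/-- Fomin–Zelevinsky matrix mutation at index `k` (for a matrix over any index type),
using `b'_{ij} = b_{ij} + [b_{ik}]₊[b_{kj}]₊ − [−b_{ik}]₊[−b_{kj}]₊` for `i,j ≠ k`. -/
def mutFZ {ι : Type} [DecidableEq ι] (k : ι) (B : Matrix ι ι ℤ) : Matrix ι ι ℤ :=
  fun i j =>
    if i = k ∨ j = k then -B i j
    else B i j + max (B i k) 0 * max (B k j) 0 - max (-B i k) 0 * max (-B k j) 0

/-- `(C, (eᵢ), (Eᵢ))` is an unfolding of the skew-symmetrizable matrix `B`: the `eᵢ` are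
positive with `bᵢⱼeⱼ = -bⱼᵢeᵢ`, `C` (indexed by the disjoint union of the `Eᵢ = Fin (eᵢ)`)
is skew-symmetric, each column of the `Eᵢ×Eⱼ` block of `C` sums to `bᵢⱼ`, and the
`Eᵢ×Eⱼ` block is nonnegative whenever `bᵢⱼ ≥ 0`. -/
def IsUnfolding {n : ℕ} (B : Matrix (Fin n) (Fin n) ℤ) (e : Fin n → ℕ)
    (C : Matrix ((i : Fin n) × Fin (e i)) ((i : Fin n) × Fin (e i)) ℤ) : Prop :=
  (∀ i, 0 < e i) ∧
  (∀ i j, B i j * (e j : ℤ) = -(B j i * (e i : ℤ))) ∧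
  (∀ x y, C y x = -C x y) ∧
  (∀ (i j : Fin n) (q : Fin (e j)), (∑ p : Fin (e i), C ⟨i, p⟩ ⟨j, q⟩) = B i j) ∧
  (∀ i j, 0 ≤ B i j → ∀ (p : Fin (e i)) (q : Fin (e j)), 0 ≤ C ⟨i, p⟩ ⟨j, q⟩) 

/-- The composite mutation `μ_k = ∏_{k̄ ∈ E_k} μ_{k̄}` of an unfolded matrix (well defined
since the diagonal blocks vanish, so the factors commute). -/
def compMut {n : ℕ} {e : Fin n → ℕ} (k : Fin n)
    (C : Matrix ((i : Fin n) × Fin (e i)) ((i : Fin n) × Fin (e i)) ℤ) :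
    Matrix ((i : Fin n) × Fin (e i)) ((i : Fin n) × Fin (e i)) ℤ :=
  ((List.finRange (e k)).map
      (fun z => mutFZ (⟨k, z⟩ : (i : Fin n) × Fin (e i)))).foldl (fun M f => f M) C

/-!
Lean's indices `0, 1, 2, 3` are the paper's `1, 2, 3, 4`.

The blocks of `C` are nonnegative wherever `B` is, and their row and column sums are entries of
`B`; so the four nonnegative blocks `C₁₄, C₄₃, C₂₁, C₃₂`, whose rows or columns sum to `1`, are
0/1 incidence matrices of maps: `C₁₄` of `u : E₁ → E₄` with fibres of size `b`, `C₄₃` of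
`h : E₃ → E₄`, `C₂₁` of `g : E₁ → E₂` with fibres of size `a`, and `C₃₂` of `f : E₃ → E₂` with
fibres of size `a`. The diagonal blocks and the blocks `E₂ × E₄`, `E₁ × E₃` vanish, so the
`(p, q)` entry of `μ₂μ₄(C)` on `E₁ × E₃` is `[u p = h q] - [g p = f q]`. Since `a < b`, the fibre
of `u` over `h q` does not fit inside the fibre of `g` over `f q`, giving a `+1`. If there were no
`-1`, then `u` would factor through `g` (via a section of `f`), making each fibre of `u` a union of
fibres of `g`, so that `a ∣ b`.
-/

open Finset

def fzTerm (x y : ℤ) : ℤ := max x 0 * max y 0 - max (-x) 0 * max (-y) 0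

@[simp] lemma fzTerm_zero_left (y : ℤ) : fzTerm 0 y = 0 := by simp [fzTerm]

@[simp] lemma fzTerm_zero_right (x : ℤ) : fzTerm x 0 = 0 := by simp [fzTerm]

lemma fzTerm_of_nonneg {x y : ℤ} (hx : 0 ≤ x) (hy : 0 ≤ y) : fzTerm x y = x * y := by
  simp [fzTerm, hx, hy]

lemma fzTerm_of_nonpos {x y : ℤ} (hx : x ≤ 0) (hy : y ≤ 0) : fzTerm x y = -(x * y) := by
  simp [fzTerm, hx, hy]

lemma mutFZ_apply_of_ne {ι : Type} [DecidableEq ι] {k i j : ι} (C : Matrix ι ι ℤ)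
    (hi : i ≠ k) (hj : j ≠ k) : mutFZ k C i j = C i j + fzTerm (C i k) (C k j) := by
  simp [mutFZ, fzTerm, hi, hj, add_sub_assoc]

lemma foldl_mutFZ_apply {ι : Type} [DecidableEq ι] (L : List ι) (hL : L.Nodup)
    (C : Matrix ι ι ℤ) (hK : ∀ k ∈ L, ∀ k' ∈ L, C k k' = 0) {x y : ι} (hx : x ∉ L)
    (hy : y ∉ L) :
    (L.map mutFZ).foldl (fun M f => f M) C x y
      = C x y + (L.map fun k => fzTerm (C x k) (C k y)).sum := by
  induction L generalizing C with
  | nil => simp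
  | cons k L ih =>
    simp only [List.mem_cons, not_or] at hx hy
    obtain ⟨hkL, hL⟩ := List.nodup_cons.mp hL
    have hne : ∀ k' ∈ L, k' ≠ k := fun k' hk' h => hkL (h ▸ hk')
    have hkk : ∀ k' ∈ L, C k k' = 0 ∧ C k' k = 0 := fun k' hk' =>
      ⟨hK _ (by simp) _ (by simp [hk']), hK _ (by simp [hk']) _ (by simp)⟩
    have hK' : ∀ k₁ ∈ L, ∀ k₂ ∈ L, mutFZ k C k₁ k₂ = 0 := fun k₁ h₁ k₂ h₂ => by
      simp [mutFZ_apply_of_ne C (hne k₁ h₁) (hne k₂ h₂), (hkk k₁ h₁).2,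
        hK _ (List.mem_cons_of_mem _ h₁) _ (List.mem_cons_of_mem _ h₂)]
    have hrow : ∀ k' ∈ L, mutFZ k C x k' = C x k' := fun k' hk' => by
      simp [mutFZ_apply_of_ne C hx.1 (hne k' hk'), (hkk k' hk').1]
    have hcol : ∀ k' ∈ L, mutFZ k C k' y = C k' y := fun k' hk' => by
      simp [mutFZ_apply_of_ne C (hne k' hk') hy.1, (hkk k' hk').2]
    rw [List.map_cons, List.foldl_cons, ih hL _ hK' hx.2 hy.2, mutFZ_apply_of_ne C hx.1 hy.1,
      List.map_congr_left fun k' hk' => by rw [hrow k' hk', hcol k' hk']]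
    simp only [List.map_cons, List.sum_cons]
    ring

lemma compMut_apply {n : ℕ} {e : Fin n → ℕ} (k : Fin n)
    (C : Matrix ((i : Fin n) × Fin (e i)) ((i : Fin n) × Fin (e i)) ℤ)
    (hK : ∀ z z', C ⟨k, z⟩ ⟨k, z'⟩ = 0) {i j : Fin n} (hi : i ≠ k) (hj : j ≠ k)
    (p : Fin (e i)) (q : Fin (e j)) :
    compMut k C ⟨i, p⟩ ⟨j, q⟩
      = C ⟨i, p⟩ ⟨j, q⟩ + ∑ z, fzTerm (C ⟨i, p⟩ ⟨k, z⟩) (C ⟨k, z⟩ ⟨j, q⟩) := by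
  have hL : ((List.finRange (e k)).map (Sigma.mk k)).Nodup :=
    (List.nodup_finRange _).map (sigma_mk_injective (β := fun i => Fin (e i)))
  have hfold : compMut k C = ((List.finRange (e k)).map (Sigma.mk k) |>.map mutFZ).foldl
      (fun M f => f M) C := by
    rw [List.map_map]; rfl
  rw [hfold, foldl_mutFZ_apply _ hL C (by simp [hK]) (by simp [Ne.symm hi])
    (by simp [Ne.symm hj]), List.map_map, Fin.sum_univ_def]
  rfl

lemma exists_eq_ite_of_nonneg_of_sum_eq_one {α : Type} [Fintype α] [DecidableEq α]
    (f : α → ℤ) (hf : ∀ x, 0 ≤ f x) (hsum : ∑ x, f x = 1) :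
    ∃ z, ∀ x, f x = if z = x then 1 else 0 := by
  obtain ⟨z, hz⟩ : ∃ z, f z ≠ 0 := by
    by_contra! h
    simp [h] at hsum
  have hrest : ∑ x ∈ univ.erase z, f x = 0 := by
    have := add_sum_erase univ f (mem_univ z)
    have := sum_nonneg fun x (_ : x ∈ univ.erase z) => hf x
    have := (hf z).lt_of_ne' hz
    omega
  refine ⟨z, fun x => ?_⟩
  split_ifs with hx
  · subst hx
    rw [← add_sum_erase univ f (mem_univ _), hrest] at hsum
    simpa using hsum
  · exact (sum_eq_zero_iff_of_nonneg fun x _ => hf x).mp hrest x (by simp [Ne.symm hx])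

section Fibers

variable {P Q R Z : Type} [Fintype P] [DecidableEq R] [DecidableEq Z]

lemma exists_eq_and_ne_of_card_lt (u : P → Z) (g : P → R) {z : Z} {r : R}
    (h : #{p | g p = r} < #{p | u p = z}) : ∃ p, u p = z ∧ g p ≠ r := by
  by_contra! H
  exact (card_le_card fun p => by simpa using H p).not_gt h

lemma dvd_card_filter_comp_eq [Fintype R] (g : P → R) (φ : R → Z) {m : ℕ}
    (hg : ∀ r, #{p | g p = r} = m) (z : Z) : m ∣ #{p | φ (g p) = z} := by
  rw [card_eq_sum_card_fiberwise (f := g) (t := univ) (by simp)]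
  refine dvd_sum fun r _ => ?_
  by_cases hr : φ r = z
  · rw [filter_filter, ← hg r]
    exact (congrArg card (filter_congr fun p _ => by grind)).dvd
  · have hempty : ∀ p, ¬(φ (g p) = z ∧ g p = r) := fun p hp => hr (hp.2 ▸ hp.1)
    simp [filter_filter, hempty]

lemma exists_eq_and_ne_of_not_dvd_card [Fintype R] (u : P → Z) (h : Q → Z) (g : P → R)
    (f : Q → R) (hf : Function.Surjective f) {m : ℕ} (hg : ∀ r, #{p | g p = r} = m) {z : Z}
    (hu : ¬ m ∣ #{p | u p = z}) : ∃ p q, g p = f q ∧ u p ≠ h q := by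
  by_contra! H
  obtain ⟨s, hs⟩ := hf.hasRightInverse
  have hus : u = fun p => h (s (g p)) := funext fun p => H p (s (g p)) (hs (g p)).symm
  exact hu (hus ▸ dvd_card_filter_comp_eq g (h ∘ s) hg z)

end Fibers

namespace IsUnfolding

variable {n : ℕ} {B : Matrix (Fin n) (Fin n) ℤ} {e : Fin n → ℕ}
  {C : Matrix ((i : Fin n) × Fin (e i)) ((i : Fin n) × Fin (e i)) ℤ}

lemma skew (hC : IsUnfolding B e C) (x y : (i : Fin n) × Fin (e i)) : C y x = -C x y :=
  hC.2.2.1 x y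

lemma sum_col (hC : IsUnfolding B e C) (i j : Fin n) (q : Fin (e j)) :
    ∑ p : Fin (e i), C ⟨i, p⟩ ⟨j, q⟩ = B i j :=
  hC.2.2.2.1 i j q

lemma sum_row (hC : IsUnfolding B e C) (i j : Fin n) (p : Fin (e i)) :
    ∑ q : Fin (e j), C ⟨i, p⟩ ⟨j, q⟩ = -B j i := by
  simp_rw [← hC.sum_col j i p, ← sum_neg_distrib, hC.skew ⟨i, p⟩, neg_neg]

lemma nonneg (hC : IsUnfolding B e C) {i j : Fin n} (hij : 0 ≤ B i j) (p : Fin (e i))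
    (q : Fin (e j)) : 0 ≤ C ⟨i, p⟩ ⟨j, q⟩ :=
  hC.2.2.2.2 i j hij p q

lemma nonpos (hC : IsUnfolding B e C) {i j : Fin n} (hji : 0 ≤ B j i) (p : Fin (e i))
    (q : Fin (e j)) : C ⟨i, p⟩ ⟨j, q⟩ ≤ 0 := by
  have := hC.nonneg hji q p
  rw [hC.skew ⟨i, p⟩] at this
  linarith

lemma eq_zero (hC : IsUnfolding B e C) {i j : Fin n} (hij : 0 ≤ B i j) (hji : 0 ≤ B j i)
    (p : Fin (e i)) (q : Fin (e j)) : C ⟨i, p⟩ ⟨j, q⟩ = 0 :=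
  le_antisymm (hC.nonpos hji p q) (hC.nonneg hij p q)

lemma exists_eq_ite_of_eq_neg_one (hC : IsUnfolding B e C) {i j : Fin n} (hij : 0 ≤ B i j)
    (hji : B j i = -1) :
    ∃ u : Fin (e i) → Fin (e j), (∀ p q, C ⟨i, p⟩ ⟨j, q⟩ = if u p = q then 1 else 0) ∧
      ∀ q, (#{p | u p = q} : ℤ) = B i j := by
  choose u hu using fun p => exists_eq_ite_of_nonneg_of_sum_eq_one _ (hC.nonneg hij p)
    (by rw [hC.sum_row, hji, neg_neg])
  refine ⟨u, hu, fun q => ?_⟩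
  simp [← hC.sum_col i j q, hu]

lemma exists_eq_ite_of_eq_one (hC : IsUnfolding B e C) {i j : Fin n} (hij : B i j = 1) :
    ∃ g : Fin (e j) → Fin (e i), (∀ p q, C ⟨i, p⟩ ⟨j, q⟩ = if g q = p then 1 else 0) ∧
      ∀ p, (#{q | g q = p} : ℤ) = -B j i := by
  choose g hg using fun q => exists_eq_ite_of_nonneg_of_sum_eq_one _
    (fun p => hC.nonneg (hij ▸ zero_le_one) p q) (by rw [hC.sum_col i j q, hij])
  refine ⟨g, fun p q => hg q p, fun p => ?_⟩
  simp [← hC.sum_row i j p, hg]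

end IsUnfolding

def obstructionMatrix (a b : ℤ) : Matrix (Fin 4) (Fin 4) ℤ :=
  !![0, -a, 0, b; 1, 0, -1, 0; 0, a, 0, -b; -1, 0, 1, 0]

section obstructionMatrix

variable {a b : ℤ} {e : Fin 4 → ℕ}
  {C : Matrix ((i : Fin 4) × Fin (e i)) ((i : Fin 4) × Fin (e i)) ℤ}

lemma compMut_compMut_apply_of_isUnfolding (hC : IsUnfolding (obstructionMatrix a b) e C)
    (ha : 0 ≤ a) (hb : 0 ≤ b) (p : Fin (e 0)) (q : Fin (e 2)) :
    compMut 1 (compMut 3 C) ⟨0, p⟩ ⟨2, q⟩ =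
      ∑ z, C ⟨0, p⟩ ⟨3, z⟩ * C ⟨3, z⟩ ⟨2, q⟩ - ∑ r, C ⟨1, r⟩ ⟨0, p⟩ * C ⟨2, q⟩ ⟨1, r⟩ := by
  have h33 : ∀ z z', C ⟨3, z⟩ ⟨3, z'⟩ = 0 := hC.eq_zero le_rfl le_rfl
  have h11 : ∀ r r', C ⟨1, r⟩ ⟨1, r'⟩ = 0 := hC.eq_zero le_rfl le_rfl
  have h13 : ∀ r z, C ⟨1, r⟩ ⟨3, z⟩ = 0 := hC.eq_zero le_rfl le_rfl
  have h31 : ∀ z r, C ⟨3, z⟩ ⟨1, r⟩ = 0 := hC.eq_zero le_rfl le_rfl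
  have h02 : C ⟨0, p⟩ ⟨2, q⟩ = 0 := hC.eq_zero le_rfl le_rfl p q
  have h11' : ∀ r r', compMut 3 C ⟨1, r⟩ ⟨1, r'⟩ = 0 := fun r r' => by
    simp [compMut_apply 3 C h33 (by decide) (by decide) r r', h11, h13]
  have h01' : ∀ r, compMut 3 C ⟨0, p⟩ ⟨1, r⟩ = C ⟨0, p⟩ ⟨1, r⟩ := fun r => by
    simp [compMut_apply 3 C h33 (by decide) (by decide) p r, h31]
  have h12' : ∀ r, compMut 3 C ⟨1, r⟩ ⟨2, q⟩ = C ⟨1, r⟩ ⟨2, q⟩ := fun r => by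
    simp [compMut_apply 3 C h33 (by decide) (by decide) r q, h13]
  have h02' : compMut 3 C ⟨0, p⟩ ⟨2, q⟩ = ∑ z, C ⟨0, p⟩ ⟨3, z⟩ * C ⟨3, z⟩ ⟨2, q⟩ := by
    rw [compMut_apply 3 C h33 (by decide) (by decide) p q, h02, zero_add]
    refine sum_congr rfl fun z _ => fzTerm_of_nonneg ?_ ?_
    · exact hC.nonneg (i := 0) (j := 3) hb p z
    · exact hC.nonneg zero_le_one z q
  rw [compMut_apply 1 _ h11' (by decide) (by decide) p q, h02', sub_eq_add_neg, ← sum_neg_distrib]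
  refine congrArg _ (sum_congr rfl fun r _ => ?_)
  rw [h01', h12', fzTerm_of_nonpos (hC.nonpos zero_le_one p r)
    (hC.nonpos (i := 1) (j := 2) ha r q), hC.skew ⟨1, r⟩, hC.skew ⟨2, q⟩]
  ring

lemma exists_fibrations_of_isUnfolding (hC : IsUnfolding (obstructionMatrix a b) e C)
    (ha : 0 ≤ a) (hb : 0 ≤ b) :
    ∃ (u : Fin (e 0) → Fin (e 3)) (h : Fin (e 2) → Fin (e 3)) (g : Fin (e 0) → Fin (e 1))
      (f : Fin (e 2) → Fin (e 1)),
      (∀ p q, compMut 1 (compMut 3 C) ⟨0, p⟩ ⟨2, q⟩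
        = (if u p = h q then 1 else 0) - (if g p = f q then 1 else 0)) ∧
      (∀ z, (#{p | u p = z} : ℤ) = b) ∧ (∀ r, (#{p | g p = r} : ℤ) = a) ∧
      ∀ r, (#{q | f q = r} : ℤ) = a := by
  obtain ⟨u, hCu, hu⟩ := hC.exists_eq_ite_of_eq_neg_one (i := 0) (j := 3) hb rfl
  obtain ⟨h, hCh, -⟩ := hC.exists_eq_ite_of_eq_one (i := 3) (j := 2) rfl
  obtain ⟨g, hCg, hg⟩ := hC.exists_eq_ite_of_eq_one (i := 1) (j := 0) rfl
  obtain ⟨f, hCf, hf⟩ := hC.exists_eq_ite_of_eq_neg_one (i := 2) (j := 1) ha rfl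
  refine ⟨u, h, g, f, fun p q => ?_, hu, fun r => (hg r).trans (neg_neg a), hf⟩
  rw [compMut_compMut_apply_of_isUnfolding hC ha hb]
  simp [hCu, hCh, hCg, hCf]

end obstructionMatrix

/-- The skew-symmetrizable matrix
`B = [[0,-a,0,b],[1,0,-1,0],[0,a,0,-b],[-1,0,1,0]]` (with `0 < a < b` and `a ∤ b`) has
skew-symmetrizer `diag(1,a,1,b)`, and it does not admit a global unfolding: for every
unfolding `(C,(eᵢ),(Eᵢ))` of `B`, the matrix `μ₂μ₄(C)` violates the sign condition of
unfoldings — concretely, its `E₁×E₃` block contains both a positive and a negative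
entry. -/
theorem stmt18 (a b : ℤ) (ha : 0 < a) (hab : a < b) (hnd : ¬ a ∣ b)
    (B : Matrix (Fin 4) (Fin 4) ℤ)
    (hB : B = !![0, -a, 0, b; 1, 0, -1, 0; 0, a, 0, -b; -1, 0, 1, 0])
    (dvec : Fin 4 → ℤ) (hdvec : dvec = ![1, a, 1, b]) :
    (∀ i j, dvec i * B i j = -(dvec j * B j i)) ∧
    ∀ (e : Fin 4 → ℕ)
      (C : Matrix ((i : Fin 4) × Fin (e i)) ((i : Fin 4) × Fin (e i)) ℤ),
      IsUnfolding B e C →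
      (∃ (p : Fin (e 0)) (q : Fin (e 2)),
        0 < compMut 1 (compMut 3 C) ⟨0, p⟩ ⟨2, q⟩) ∧
      (∃ (p : Fin (e 0)) (q : Fin (e 2)),
        compMut 1 (compMut 3 C) ⟨0, p⟩ ⟨2, q⟩ < 0) := by
  subst hB hdvec
  refine ⟨fun i j => by fin_cases i <;> fin_cases j <;> simp, fun e C hC => ?_⟩
  lift a to ℕ using ha.le
  lift b to ℕ using ha.le.trans hab.le
  obtain ⟨u, h, g, f, hentry, hu, hg, hf⟩ :=
    exists_fibrations_of_isUnfolding hC (by positivity) (by positivity)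
  simp only [Nat.cast_inj] at hu hg hf
  have q₀ : Fin (e 2) := ⟨0, hC.1 2⟩
  have z₀ : Fin (e 3) := ⟨0, hC.1 3⟩
  constructor
  · obtain ⟨p, hp, hne⟩ := exists_eq_and_ne_of_card_lt u g (z := h q₀) (r := f q₀)
      (by rw [hu, hg]; exact_mod_cast hab)
    exact ⟨p, q₀, by simp [hentry, hp, hne]⟩
  · have hf_surj : Function.Surjective f := fun r =>
      card_pos.mp (by rw [hf]; exact_mod_cast ha) |>.imp fun q hq => by simpa using hq
    obtain ⟨p, q, hgf, hne⟩ := exists_eq_and_ne_of_not_dvd_card u h g f hf_surj hg (z := z₀)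
      (by rw [hu]; exact_mod_cast hnd)
    exact ⟨p, q, by simp [hentry, hgf, hne]⟩
end

section
/- Suppose B is an n×n skew-symmetrizable integer matrix for which there exist positive integers e_1,…,e_n with b_{ij}e_j = -b_{ji}e_i and e_i | b_{ij} for all i,j. Define C indexed by disjoint sets E_i with |E_i| = e_i via c_{ī j̄} = b_{ij}/e_i for ī ∈ E_i, j̄ ∈ E_j. Then C is skew-symmetric, (C,(e_i),(E_i)) is an unfolding of B, and for every k, μ_k(C) (the composite mutation ∏_{k̄ ∈ E_k} μ_{k̄}) together with (e_i),(E_i) is an unfolding of μ_k(B) of the same form. -/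
/-!
Write `bᵢⱼ = eᵢ aᵢⱼ`; then `a` is skew-symmetric and `C` is the block matrix of `a`. Mutating a
block matrix successively at distinct vertices of the block `E_k` flips the sign of every entry
in the row or column of a mutated vertex, leaves the `E_k × E_k` block zero (as `a_kk = 0`), and
adds the exchange term of `a` once per step to every entry off the rows and columns of `E_k`.
After all `e_k` steps this is the block matrix of `weightedMut (e k) k a`, which is `μ_k(B)`
divided row by row by `eᵢ`, because positive scaling commutes with `[·]₊`.
-/

section BlockMutation

variable {ι κ : Type} [DecidableEq ι] [DecidableEq κ]

def exchangeTerm (a : Matrix κ κ ℤ) (k i j : κ) : ℤ :=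
  max (a i k) 0 * max (a k j) 0 - max (-a i k) 0 * max (-a k j) 0

def weightedMut (w : ℤ) (k : κ) (a : Matrix κ κ ℤ) : Matrix κ κ ℤ :=
  fun i j => if i = k ∨ j = k then -a i j else a i j + w * exchangeTerm a k i j

/-- The block matrix `a.submatrix π π` after mutating at the distinct vertices of `S ⊆ π⁻¹(k)`. -/
def partialCompMut (π : ι → κ) (a : Matrix κ κ ℤ) (k : κ) (S : List ι) : Matrix ι ι ℤ :=
  fun x y =>
    if x ∈ S ∨ y ∈ S then -a (π x) (π y)
    else if π x = k ∨ π y = k then a (π x) (π y)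
    else a (π x) (π y) + S.length * exchangeTerm a k (π x) (π y)

variable (π : ι → κ) {a : Matrix κ κ ℤ} {k : κ}

lemma partialCompMut_nil : partialCompMut π a k [] = a.submatrix π π := by
  ext x y
  simp [partialCompMut]

lemma mutFZ_partialCompMut (hkk : a k k = 0) {S : List ι} (hS : ∀ s ∈ S, π s = k) {z : ι}
    (hz : π z = k) (hzS : z ∉ S) :
    mutFZ z (partialCompMut π a k S) = partialCompMut π a k (S ++ [z]) := by
  ext x y
  have hx := hS x
  have hy := hS y
  simp only [mutFZ, partialCompMut, exchangeTerm, List.mem_append, List.mem_singleton,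
    List.length_append, List.length_singleton]
  split_ifs <;> grind

lemma foldl_mutFZ_partialCompMut (hkk : a k k = 0) (S L : List ι) (hnd : (S ++ L).Nodup)
    (hk : ∀ x ∈ S ++ L, π x = k) :
    (L.map mutFZ).foldl (fun M f => f M) (partialCompMut π a k S) =
      partialCompMut π a k (S ++ L) := by
  induction L generalizing S with
  | nil => simp
  | cons z L ih =>
    have hzS : z ∉ S := fun h => (List.nodup_append.mp hnd).2.2 z h z (by simp) rfl
    rw [List.map_cons, List.foldl_cons,
      mutFZ_partialCompMut π hkk (fun s hs => hk s (by simp [hs])) (hk z (by simp)) hzS]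
    simpa using ih (S ++ [z]) (by simpa using hnd) (by simpa using hk)

lemma partialCompMut_of_mem_iff {S : List ι} (hS : ∀ x, x ∈ S ↔ π x = k) :
    partialCompMut π a k S = (weightedMut S.length k a).submatrix π π := by
  ext x y
  simp only [partialCompMut, Matrix.submatrix_apply, weightedMut, hS]
  split_ifs <;> rfl

end BlockMutation

lemma exchangeTerm_swap {κ : Type} {a : Matrix κ κ ℤ} (ha : ∀ i j, a j i = -a i j) (k i j : κ) :
    exchangeTerm a k j i = -exchangeTerm a k i j := by
  rw [exchangeTerm, exchangeTerm, ha k j, ha i k, neg_neg, neg_neg]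
  ring

lemma weightedMut_swap {κ : Type} [DecidableEq κ] {a : Matrix κ κ ℤ}
    (ha : ∀ i j, a j i = -a i j) (w : ℤ) (k i j : κ) :
    weightedMut w k a j i = -weightedMut w k a i j := by
  simp only [weightedMut, ha i j, exchangeTerm_swap ha k i j]
  split_ifs <;> grind

lemma mutFZ_of_eq_mul {κ : Type} [DecidableEq κ] {B a : Matrix κ κ ℤ} {e : κ → ℤ}
    (he : ∀ i, 0 ≤ e i) (hB : ∀ i j, B i j = e i * a i j) (k i j : κ) :
    mutFZ k B i j = e i * weightedMut (e k) k a i j := by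
  have hmax : ∀ i t, max (e i * t) 0 = e i * max t 0 := fun i t => by
    rw [mul_max_of_nonneg _ _ (he i), mul_zero]
  simp only [mutFZ, weightedMut, exchangeTerm, hB, ← mul_neg, hmax]
  split_ifs <;> ring

lemma skew_of_eq_mul {κ : Type} {B a : Matrix κ κ ℤ} {e : κ → ℤ} (he : ∀ i, e i ≠ 0)
    (hskew : ∀ i j, B i j * e j = -(B j i * e i)) (hB : ∀ i j, B i j = e i * a i j) (i j : κ) :
    a j i = -a i j := by
  have h := hskew i j
  rw [hB, hB] at h
  exact mul_left_cancel₀ (mul_ne_zero (he i) (he j)) (by linear_combination h)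

lemma isUnfolding_of_eq_mul {n : ℕ} {B a : Matrix (Fin n) (Fin n) ℤ} {e : Fin n → ℕ}
    (he : ∀ i, 0 < e i) (ha : ∀ i j, a j i = -a i j) (hB : ∀ i j, B i j = e i * a i j) :
    IsUnfolding B e (a.submatrix Sigma.fst Sigma.fst) := by
  refine ⟨he, fun i j => by rw [hB, hB, ha i j]; ring, fun x y => ha _ _,
    fun i j q => by simp [hB], fun i j hij p q => ?_⟩
  rw [hB] at hij
  exact (mul_nonneg_iff_of_pos_left (by exact_mod_cast he i)).mp hij

lemma compMut_submatrix {n : ℕ} {e : Fin n → ℕ} {a : Matrix (Fin n) (Fin n) ℤ} {k : Fin n}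
    (hkk : a k k = 0) :
    compMut k (a.submatrix Sigma.fst Sigma.fst : Matrix ((i : Fin n) × Fin (e i)) _ ℤ) =
      (weightedMut (e k) k a).submatrix Sigma.fst Sigma.fst := by
  set S : List ((i : Fin n) × Fin (e i)) := (List.finRange (e k)).map (Sigma.mk k)
  have hS : ∀ x, x ∈ S ↔ x.1 = k := fun ⟨i, p⟩ => by
    simp only [S, List.mem_map, List.mem_finRange, true_and, Sigma.mk.inj_iff]
    exact ⟨fun ⟨_, h, _⟩ => h.symm, by rintro rfl; exact ⟨p, rfl, HEq.rfl⟩⟩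
  have hnd : S.Nodup := (List.nodup_finRange _).map sigma_mk_injective
  have h := foldl_mutFZ_partialCompMut Sigma.fst hkk [] S (by simpa using hnd)
    (fun x hx => (hS x).mp (by simpa using hx))
  rwa [partialCompMut_nil, List.nil_append, partialCompMut_of_mem_iff _ hS, List.map_map,
    show S.length = e k by simp [S]] at h

/-- Global unfoldings exist in the divisible case: if `B` is skew-symmetrizable via
positive integers `eᵢ` with `bᵢⱼeⱼ = -bⱼᵢeᵢ` and `eᵢ ∣ bᵢⱼ` for all `i,j`, then the matrix
`C` with constant blocks `c_{ī j̄} = bᵢⱼ/eᵢ` is skew-symmetric, `(C,(eᵢ),(Eᵢ))` is an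
unfolding of `B`, and for every `k` the composite mutation `μ_k(C)` is an unfolding of
`μ_k(B)` of the same form. -/
theorem stmt19 {n : ℕ} (B : Matrix (Fin n) (Fin n) ℤ) (e : Fin n → ℕ)
    (hpos : ∀ i, 0 < e i)
    (hskew : ∀ i j, B i j * (e j : ℤ) = -(B j i * (e i : ℤ)))
    (hdvd : ∀ i j, (e i : ℤ) ∣ B i j)
    (C : Matrix ((i : Fin n) × Fin (e i)) ((i : Fin n) × Fin (e i)) ℤ)
    (hC : ∀ x y, C x y = B x.1 y.1 / (e x.1 : ℤ)) :
    (∀ x y, C y x = -C x y) ∧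
    IsUnfolding B e C ∧
    ∀ k : Fin n,
      IsUnfolding (mutFZ k B) e (compMut k C) ∧
      (∀ x y, compMut k C x y = mutFZ k B x.1 y.1 / (e x.1 : ℤ)) := by
  set a : Matrix (Fin n) (Fin n) ℤ := fun i j => B i j / e i
  have hB : ∀ i j, B i j = e i * a i j := fun i j => (Int.mul_ediv_cancel' (hdvd i j)).symm
  have he : ∀ i, (e i : ℤ) ≠ 0 := fun i => by have := hpos i; positivity
  have ha : ∀ i j, a j i = -a i j := skew_of_eq_mul (e := fun i => (e i : ℤ)) he hskew hB
  have hmut : ∀ k i j, mutFZ k B i j = e i * weightedMut (e k) k a i j :=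
    mutFZ_of_eq_mul (e := fun i => (e i : ℤ)) (fun i => by positivity) hB
  obtain rfl : C = a.submatrix Sigma.fst Sigma.fst := Matrix.ext hC
  have hunf := isUnfolding_of_eq_mul hpos ha hB
  refine ⟨hunf.2.2.1, hunf, fun k => ?_⟩
  rw [compMut_submatrix (by linarith [ha k k])]
  refine ⟨isUnfolding_of_eq_mul hpos (weightedMut_swap ha _ k) (hmut k), fun x y => ?_⟩
  rw [hmut, Int.mul_ediv_cancel_left _ (he _), Matrix.submatrix_apply]
end
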